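/- Well-scaled diffusion limit in transform space: let α ∈ (0,2], β ∈ (0,1], and suppose 1 - ŵ(κ) ∼ μ|κ|^α as κ → 0 and 1 - φ̃(s) ∼ λ s^β as s → 0⁺ with μ, λ > 0. Fix κ ≠ 0 and s > 0 and, for h > 0, choose τ = τ(h) = (μ h^α / λ)^{1/β}. Then the rescaled Montroll-Weiss function p̂̃_{h,τ}(κ,s) = [(1 - φ̃(τ s))/s] · 1/(1 - ŵ(hκ) φ̃(τ s)) converges, as h → 0⁺, to s^{β-1}/(|κ|^α + s^β). -/

import Mathlib

/-!
Everything is measured against the spatial scale `ε = μ h^α`. The scaling relation gives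
`λ (τ s)^β = ε s^β`, so the asymptotic hypotheses say that `1 - φ̃(τ s) ≈ ε s^β` and
`1 - ŵ(hκ) ≈ ε |κ|^α`. Writing `1 - ŵ φ̃ = (1 - ŵ) + ŵ (1 - φ̃)` and dividing numerator and
denominator by `ε`, the Montroll-Weiss function tends to `s^β / (s (|κ|^α + s^β))`.
-/

open Real Filter Set Topology

theorem tendsto_const_mul_rpow_nhdsGT_zero {c α : ℝ} (hc : 0 < c) (hα : 0 < α) :
    Tendsto (fun x : ℝ => c * x ^ α) (𝓝[>] 0) (𝓝[>] 0) := by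
  refine tendsto_nhdsWithin_of_tendsto_nhds_of_eventually_within _ ?_ ?_
  · have hcont : ContinuousAt (fun x : ℝ => c * x ^ α) 0 :=
      continuousAt_const.mul (Real.continuousAt_rpow_const 0 α (Or.inr hα.le))
    simpa [Real.zero_rpow hα.ne'] using hcont.tendsto.mono_left nhdsWithin_le_nhds
  · filter_upwards [self_mem_nhdsWithin] with x hx
    exact mul_pos hc (Real.rpow_pos_of_pos hx α)

theorem tendsto_mul_const_nhdsNE_zero {𝕜 : Type*} [NormedDivisionRing 𝕜] {c : 𝕜} (hc : c ≠ 0) :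
    Tendsto (· * c) (𝓝[≠] 0) (𝓝[≠] 0) := by
  refine tendsto_nhdsWithin_of_tendsto_nhds_of_eventually_within _ ?_ ?_
  · simpa using (continuous_mul_const c).continuousWithinAt.tendsto (s := {0}ᶜ) (x := 0)
  · filter_upwards [self_mem_nhdsWithin] with x hx
    exact mul_ne_zero hx hc

section Field

variable {ι 𝕜 : Type*} [Field 𝕜] [TopologicalSpace 𝕜] [ContinuousMul 𝕜] {l : Filter ι}

theorem Filter.Tendsto.div_of_eq_mul_const {u v w : ι → 𝕜} {L : 𝕜} (hL : L ≠ 0)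
    (huv : Tendsto (fun i => u i / v i) l (𝓝 1)) (hv : ∀ᶠ i in l, v i = w i * L) :
    Tendsto (fun i => u i / w i) l (𝓝 L) := by
  refine (one_mul L ▸ huv.mul_const L).congr' ?_
  filter_upwards [hv] with i hi
  rcases eq_or_ne (w i) 0 with hw | hw
  · simp [hi, hw]
  · rw [hi]
    field_simp

theorem Filter.Tendsto.of_div_of_tendsto_zero {u ε : ι → 𝕜} {K : 𝕜}
    (hu : Tendsto (fun i => u i / ε i) l (𝓝 K)) (hε : Tendsto ε l (𝓝[≠] 0)) :
    Tendsto u l (𝓝 0) := by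
  obtain ⟨hε0, hε_ne⟩ := tendsto_nhdsWithin_iff.1 hε
  refine (mul_zero K ▸ hu.mul hε0).congr' ?_
  filter_upwards [hε_ne] with i hi
  exact div_mul_cancel₀ (u i) hi

end Field

/-- No hypothesis on `1 - q * p` is needed: where it vanishes, both sides are `0`. -/
theorem montrollWeiss_eq_rescaled {p q c : ℝ} (s : ℝ) (hc : c ≠ 0) :
    (1 - p) / s * (1 / (1 - q * p)) =
      ((1 - p) / c) / (s * ((1 - q) / c + q * ((1 - p) / c))) := by
  have hden : (1 - q) / c + q * ((1 - p) / c) = (1 - q * p) / c := by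
    field_simp
    ring
  rw [hden, ← mul_div_assoc s, div_div_div_cancel_right₀ hc, div_mul_div_comm, mul_one]

theorem well_scaled_diffusion_limit_general (α β μ lam : ℝ)
    (hα : α ∈ Set.Ioc (0:ℝ) 2) (hβ : β ∈ Set.Ioc (0:ℝ) 1)
    (hμ : 0 < μ) (hlam : 0 < lam)
    (wh : ℝ → ℝ) (φt : ℝ → ℝ)
    (hw_asymp : Tendsto (fun κ : ℝ => (1 - wh κ) / (μ * |κ| ^ α))
      (nhdsWithin 0 {0}ᶜ) (nhds 1))
    (hφ_asymp : Tendsto (fun s : ℝ => (1 - φt s) / (lam * s ^ β))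
      (nhdsWithin 0 (Set.Ioi 0)) (nhds 1))
    (κ : ℝ) (hκ : κ ≠ 0) (s : ℝ) (hs : 0 < s)
    (τ : ℝ → ℝ) (hτ : ∀ h : ℝ, τ h = (μ * h ^ α / lam) ^ (1 / β)) :
    Tendsto
      (fun h : ℝ =>
        ((1 - φt (τ h * s)) / s) * (1 / (1 - wh (h * κ) * φt (τ h * s))))
      (nhdsWithin 0 (Set.Ioi 0))
      (nhds (s ^ (β - 1) / (|κ| ^ α + s ^ β))) := by
  obtain ⟨hα0, -⟩ := hα
  obtain ⟨hβ0, -⟩ := hβ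
  have hτs : Tendsto (fun h => τ h * s) (𝓝[>] 0) (𝓝[>] 0) := by
    refine ((tendsto_const_mul_rpow_nhdsGT_zero hs (one_div_pos.2 hβ0)).comp
      (tendsto_const_mul_rpow_nhdsGT_zero (div_pos hμ hlam) hα0)).congr fun h => ?_
    simp only [Function.comp_apply, hτ, mul_div_right_comm, mul_comm s]
  have hF : Tendsto (fun h => (1 - φt (τ h * s)) / (μ * h ^ α)) (𝓝[>] 0) (𝓝 (s ^ β)) := by
    refine (hφ_asymp.comp hτs).div_of_eq_mul_const (by positivity) ?_
    filter_upwards [self_mem_nhdsWithin] with h (hh : 0 < h)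
    rw [hτ, Real.mul_rpow (by positivity) hs.le, one_div,
      Real.rpow_inv_rpow (by positivity) hβ0.ne']
    field_simp
  have hG : Tendsto (fun h => (1 - wh (h * κ)) / (μ * h ^ α)) (𝓝[>] 0) (𝓝 (|κ| ^ α)) := by
    refine (hw_asymp.comp ((tendsto_mul_const_nhdsNE_zero hκ).mono_left
      (nhdsGT_le_nhdsNE 0))).div_of_eq_mul_const (by positivity) ?_
    filter_upwards [self_mem_nhdsWithin] with h (hh : 0 < h)
    rw [abs_mul, abs_of_pos hh, Real.mul_rpow hh.le (abs_nonneg κ), mul_assoc]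
  have hw : Tendsto (fun h => wh (h * κ)) (𝓝[>] 0) (𝓝 1) := by
    simpa only [sub_sub_cancel, sub_zero] using (hG.of_div_of_tendsto_zero
      ((tendsto_const_mul_rpow_nhdsGT_zero hμ hα0).mono_right (nhdsGT_le_nhdsNE 0))).const_sub 1
  have hlim := hF.div (tendsto_const_nhds (x := s).mul (hG.add (hw.mul hF))) (by positivity)
  have htarget : s ^ β / (s * (|κ| ^ α + 1 * s ^ β)) = s ^ (β - 1) / (|κ| ^ α + s ^ β) := by
    rw [one_mul, Real.rpow_sub_one hs.ne', div_div, mul_comm s]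
  rw [← htarget]
  refine hlim.congr' ?_
  filter_upwards [self_mem_nhdsWithin] with h (hh : 0 < h)
  exact (montrollWeiss_eq_rescaled s (by positivity)).symm

/-- Well-scaled passage to the diffusion limit in the Fourier-Laplace domain:
under the scaling relation `τ = (μ h^α / λ)^{1/β}` the rescaled Montroll-Weiss
function tends to `s^{β-1}/(|κ|^α + s^β)` as `h → 0⁺`. -/
theorem well_scaled_diffusion_limit (α β μ lam : ℝ)
    (hα : α ∈ Set.Ioc (0:ℝ) 2) (hβ : β ∈ Set.Ioc (0:ℝ) 1)
    (hμ : 0 < μ) (hlam : 0 < lam)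
    (wh : ℝ → ℝ) (φt : ℝ → ℝ)
    (hw_bd : ∀ κ, |wh κ| ≤ 1) (hw0 : wh 0 = 1)
    (hφ_bd : ∀ s > (0:ℝ), 0 < φt s ∧ φt s < 1)
    (hw_asymp : Tendsto (fun κ : ℝ => (1 - wh κ) / (μ * |κ| ^ α))
      (nhdsWithin 0 {0}ᶜ) (nhds 1))
    (hφ_asymp : Tendsto (fun s : ℝ => (1 - φt s) / (lam * s ^ β))
      (nhdsWithin 0 (Set.Ioi 0)) (nhds 1))
    (κ : ℝ) (hκ : κ ≠ 0) (s : ℝ) (hs : 0 < s)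
    (τ : ℝ → ℝ) (hτ : ∀ h : ℝ, τ h = (μ * h ^ α / lam) ^ (1 / β)) :
    Tendsto
      (fun h : ℝ =>
        ((1 - φt (τ h * s)) / s) * (1 / (1 - wh (h * κ) * φt (τ h * s))))
      (nhdsWithin 0 (Set.Ioi 0))
      (nhds (s ^ (β - 1) / (|κ| ^ α + s ^ β))) :=
  well_scaled_diffusion_limit_general α β μ lam hα hβ hμ hlam wh φt hw_asymp hφ_asymp κ hκ s hs τ hτ
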